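/- The map ε ↦ μ(ε) (minimal support size of one-sided ε-approximations of X) is a step function taking at most n+1 distinct values, and its points of discontinuity are contained in the set E of pairwise differences of CDF values of X (together with the CDF values themselves). -/
import Mathlib


open scoped Classical

/-- A finitely supported discrete random variable on ℝ, given by its
probability mass function. -/
structure DRV where
  f : ℝ →₀ ℝ
  nonneg : ∀ x, 0 ≤ f x
  sum_one : f.sum (fun _ p => p) = 1

/-- The cumulative distribution function `F_X(t) = Pr(X ≤ t)`. -/
noncomputable def DRV.cdf (X : DRV) (t : ℝ) : ℝ :=
  ∑ x ∈ X.f.support.filter (· ≤ t), X.f x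

/-- The Kolmogorov distance `d_K(X,X') = sup_t |F_X(t) - F_{X'}(t)|`. -/
noncomputable def dK (X Y : DRV) : ℝ := ⨆ t : ℝ, |X.cdf t - Y.cdf t|

/-- The size of the support of a random variable. -/
def DRV.suppSize (X : DRV) : ℕ := X.f.support.card

/-- The minimal support size of a one-sided `ε`-approximation of `X`. -/
noncomputable def mu (X : DRV) (ε : ℝ) : ℕ :=
  sInf {k | ∃ X' : DRV, (∀ t, X.cdf t ≤ X'.cdf t) ∧ dK X X' ≤ ε ∧
    X'.suppSize = k}

/-- The set `E` of pairwise differences of CDF values of `X` (including the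
CDF values themselves, viewed as differences from `0`). -/
def diffSet (X : DRV) : Set ℝ :=
  {d | ∃ a ∈ X.f.support, ∃ b ∈ X.f.support, a < b ∧ d = X.cdf b - X.cdf a}
    ∪ {d | ∃ b ∈ X.f.support, d = X.cdf b}

namespace DRV

lemma supp_nonempty (X : DRV) : X.f.support.Nonempty := by
  rcases Finset.eq_empty_or_nonempty X.f.support with h | h
  · exfalso
    have := X.sum_one
    rw [Finsupp.sum, h, Finset.sum_empty] at this
    norm_num at this
  · exact h

lemma cdf_nonneg (X : DRV) (t : ℝ) : 0 ≤ X.cdf t :=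
  Finset.sum_nonneg fun x _ => X.nonneg x

lemma cdf_le_one (X : DRV) (t : ℝ) : X.cdf t ≤ 1 := by
  rw [← X.sum_one, Finsupp.sum]
  exact Finset.sum_le_sum_of_subset_of_nonneg (Finset.filter_subset _ _)
    (fun x _ _ => X.nonneg x)

lemma cdf_mono (X : DRV) {s t : ℝ} (h : s ≤ t) : X.cdf s ≤ X.cdf t := by
  apply Finset.sum_le_sum_of_subset_of_nonneg _ (fun x _ _ => X.nonneg x)
  intro x hx
  simp only [Finset.mem_filter] at hx ⊢
  exact ⟨hx.1, hx.2.trans h⟩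

noncomputable def cdfLt (X : DRV) (t : ℝ) : ℝ :=
  ∑ x ∈ X.f.support.filter (· < t), X.f x

lemma cdfLt_le_cdf (X : DRV) (t : ℝ) : X.cdfLt t ≤ X.cdf t := by
  apply Finset.sum_le_sum_of_subset_of_nonneg _ (fun x _ _ => X.nonneg x)
  intro x hx
  simp only [Finset.mem_filter] at hx ⊢
  exact ⟨hx.1, hx.2.le⟩

lemma cdf_le_cdfLt (X : DRV) {s t : ℝ} (h : s < t) : X.cdf s ≤ X.cdfLt t := by
  apply Finset.sum_le_sum_of_subset_of_nonneg _ (fun x _ _ => X.nonneg x)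
  intro x hx
  simp only [Finset.mem_filter] at hx ⊢
  exact ⟨hx.1, lt_of_le_of_lt hx.2 h⟩

lemma cdfLt_min (X : DRV) : X.cdfLt (X.f.support.min' X.supp_nonempty) = 0 := by
  rw [cdfLt]
  apply Finset.sum_eq_zero
  intro x hx
  simp only [Finset.mem_filter] at hx
  exact absurd hx.2 (not_lt.mpr (X.f.support.min'_le x hx.1))

lemma cdf_max (X : DRV) : X.cdf (X.f.support.max' X.supp_nonempty) = 1 := by
  rw [cdf, ← X.sum_one, Finsupp.sum]
  congr 1
  apply Finset.filter_true_of_mem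
  intro x hx
  exact X.f.support.le_max' x hx

end DRV

lemma bdd_dk (X Y : DRV) : BddAbove (Set.range fun t => |X.cdf t - Y.cdf t|) := by
  refine ⟨2, ?_⟩
  rintro _ ⟨t, rfl⟩
  have h1 := X.cdf_nonneg t; have h2 := X.cdf_le_one t
  have h3 := Y.cdf_nonneg t; have h4 := Y.cdf_le_one t
  rw [abs_le]; constructor <;> linarith

lemma abs_le_dK (X Y : DRV) (t : ℝ) : |X.cdf t - Y.cdf t| ≤ dK X Y :=
  le_ciSup (bdd_dk X Y) t

lemma dK_le (X Y : DRV) {d : ℝ} (h : ∀ t, |X.cdf t - Y.cdf t| ≤ d) : dK X Y ≤ d :=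
  ciSup_le h

lemma dK_self (X : DRV) : dK X X = 0 := by
  simp only [dK, sub_self, abs_zero]
  exact ciSup_const


/-- the value of the approximating CDF on the block starting at `a`:
`cdfLt` of the next block start, or `1` if `a` starts the last block. -/
noncomputable def nextVal (X : DRV) (A : Finset ℝ) (a : ℝ) : ℝ :=
  if h : (A.filter (a < ·)).Nonempty then X.cdfLt ((A.filter (a < ·)).min' h) else 1

lemma cdf_le_nextVal (X : DRV) (A : Finset ℝ) (a : ℝ) : X.cdf a ≤ nextVal X A a := by
  rw [nextVal]
  split_ifs with h
  · have hm := (A.filter (a < ·)).min'_mem h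
    simp only [Finset.mem_filter] at hm
    exact X.cdf_le_cdfLt hm.2
  · exact X.cdf_le_one a

/-- `nextVal` equals the CDF of `X` at some support point `b ≥ a`, with no
block start in `(a, b]`. -/
lemma nextVal_eq_cdf (X : DRV) (A : Finset ℝ) (hA : A ⊆ X.f.support) {a : ℝ}
    (ha : a ∈ A) :
    ∃ b ∈ X.f.support, a ≤ b ∧ nextVal X A a = X.cdf b ∧
      ∀ m ∈ A, a < m → b < m := by
  rw [nextVal]
  split_ifs with h
  · have hb'mem := (A.filter (a < ·)).min'_mem h
    have hab' : a < (A.filter (a < ·)).min' h := (Finset.mem_filter.mp hb'mem).2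
    set b' := (A.filter (a < ·)).min' h with hb'def
    have hamem : a ∈ X.f.support.filter (· < b') :=
      Finset.mem_filter.mpr ⟨hA ha, hab'⟩
    have hne : (X.f.support.filter (· < b')).Nonempty := ⟨a, hamem⟩
    set b := (X.f.support.filter (· < b')).max' hne with hbdef
    have hbmem : b ∈ X.f.support.filter (· < b') := (X.f.support.filter (· < b')).max'_mem hne
    have hbS : b ∈ X.f.support := (Finset.mem_filter.mp hbmem).1
    have hbb' : b < b' := (Finset.mem_filter.mp hbmem).2
    refine ⟨b, hbS, Finset.le_max' (X.f.support.filter (· < b')) a hamem, ?_, ?_⟩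
    · rw [DRV.cdfLt, DRV.cdf]
      congr 1
      apply Finset.ext
      intro x
      simp only [Finset.mem_filter]
      constructor
      · rintro ⟨hx, hxb'⟩
        exact ⟨hx, Finset.le_max' (X.f.support.filter (· < b')) x
          (Finset.mem_filter.mpr ⟨hx, hxb'⟩)⟩
      · rintro ⟨hx, hxb⟩
        exact ⟨hx, lt_of_le_of_lt hxb hbb'⟩
    · intro m hm ham
      have hmb' : b' ≤ m := Finset.min'_le _ m (Finset.mem_filter.mpr ⟨hm, ham⟩)
      exact lt_of_lt_of_le hbb' hmb'
  · refine ⟨X.f.support.max' X.supp_nonempty, X.f.support.max'_mem _, ?_, ?_, ?_⟩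
    · exact Finset.le_max' _ a (hA ha)
    · exact (X.cdf_max).symm
    · intro m hm ham
      exact absurd ⟨m, Finset.mem_filter.mpr ⟨hm, ham⟩⟩ h

/-- telescoping sum over a downward-closed subset `B` of `A`. -/
lemma telescope (X : DRV) (A : Finset ℝ) :
    ∀ (B : Finset ℝ) (hB : B.Nonempty), B ⊆ A →
      (∀ x ∈ A, x ≤ B.max' hB → x ∈ B) →
      ∑ a ∈ B, (nextVal X A a - X.cdfLt a)
        = nextVal X A (B.max' hB) - X.cdfLt (B.min' hB) := by
  intro B
  induction B using Finset.strongInductionOn with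
  | _ B ih =>
    intro hB hBA hdc
    rcases Finset.eq_empty_or_nonempty (B.erase (B.max' hB)) with he | hne
    · -- B = {max}
      have hBm : B = {B.max' hB} := by
        apply Finset.eq_singleton_iff_unique_mem.mpr
        refine ⟨B.max'_mem hB, fun x hx => ?_⟩
        by_contra hxm
        exact (Finset.notMem_empty x) (he ▸ Finset.mem_erase.mpr ⟨hxm, hx⟩)
      have hmin : B.min' hB = B.max' hB :=
        (Finset.eq_singleton_iff_unique_mem.mp hBm).2 _ (B.min'_mem hB)
      have hsum : ∑ a ∈ B, (nextVal X A a - X.cdfLt a)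
          = nextVal X A (B.max' hB) - X.cdfLt (B.max' hB) := by
        conv_lhs => rw [hBm]
        rw [Finset.sum_singleton]
      rw [hsum, hmin]
    · have hsum : ∑ a ∈ B, (nextVal X A a - X.cdfLt a)
          = (nextVal X A (B.max' hB) - X.cdfLt (B.max' hB))
            + ∑ a ∈ B.erase (B.max' hB), (nextVal X A a - X.cdfLt a) := by
        exact (Finset.add_sum_erase B (fun a => nextVal X A a - X.cdfLt a)
          (B.max'_mem hB)).symm
      set B' := B.erase (B.max' hB) with hB'def
      have hssub : B' ⊂ B := Finset.erase_ssubset (B.max'_mem hB)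
      have hB'A : B' ⊆ A := (Finset.erase_subset _ _).trans hBA
      have hmax'lt : B'.max' hne < B.max' hB := by
        have h1 : B'.max' hne ∈ B' := B'.max'_mem hne
        have h2 := Finset.mem_erase.mp h1
        exact lt_of_le_of_ne (Finset.le_max' B _ h2.2) h2.1
      have hdc' : ∀ x ∈ A, x ≤ B'.max' hne → x ∈ B' := by
        intro x hx hxle
        have hxB : x ∈ B := hdc x hx (hxle.trans hmax'lt.le)
        exact Finset.mem_erase.mpr ⟨ne_of_lt (lt_of_le_of_lt hxle hmax'lt), hxB⟩
      rw [hsum, ih B' hssub hne hB'A hdc']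
      have hkey : nextVal X A (B'.max' hne) = X.cdfLt (B.max' hB) := by
        rw [nextVal]
        have hmem : B.max' hB ∈ A.filter (B'.max' hne < ·) :=
          Finset.mem_filter.mpr ⟨hBA (B.max'_mem hB), hmax'lt⟩
        have hne2 : (A.filter (B'.max' hne < ·)).Nonempty := ⟨_, hmem⟩
        rw [dif_pos hne2]
        congr 1
        apply le_antisymm (Finset.min'_le _ _ hmem)
        have hmm := (A.filter (B'.max' hne < ·)).min'_mem hne2
        simp only [Finset.mem_filter] at hmm
        by_contra hlt
        push_neg at hlt
        have hxB : (A.filter (B'.max' hne < ·)).min' hne2 ∈ B :=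
          hdc _ hmm.1 hlt.le
        have hxB' : (A.filter (B'.max' hne < ·)).min' hne2 ∈ B' :=
          Finset.mem_erase.mpr ⟨ne_of_lt hlt, hxB⟩
        exact absurd (Finset.le_max' B' _ hxB') (not_le.mpr hmm.2)
      rw [hkey]
      have hminB : B.min' hB = B'.min' hne := by
        have h1 : B.min' hB ∈ B' := by
          refine Finset.mem_erase.mpr ⟨?_, B.min'_mem hB⟩
          intro hEq
          obtain ⟨b, hb⟩ := hne
          have hbB := (Finset.mem_erase.mp hb).2
          have h3 := B.min'_le b hbB
          rw [hEq] at h3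
          exact absurd h3 (not_le.mpr (lt_of_le_of_ne (Finset.le_max' B b hbB)
            (Finset.mem_erase.mp hb).1))
        apply le_antisymm
        · exact B.min'_le _ ((Finset.erase_subset _ _) (B'.min'_mem hne))
        · exact Finset.min'_le B' _ h1
      rw [hminB]
      ring

section Approx

variable (X : DRV) (A : Finset ℝ)

noncomputable def approxF : ℝ →₀ ℝ :=
  Finsupp.onFinset A (fun a => if a ∈ A then nextVal X A a - X.cdfLt a else 0)
    (fun a h => by by_contra hc; simp [hc] at h)

lemma approxF_apply {a : ℝ} (ha : a ∈ A) :
    approxF X A a = nextVal X A a - X.cdfLt a := by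
  simp [approxF, ha]

lemma approxF_support_subset : (approxF X A).support ⊆ A :=
  Finsupp.support_onFinset_subset

lemma approxF_nonneg (x : ℝ) : 0 ≤ approxF X A x := by
  rw [approxF, Finsupp.onFinset_apply]
  split_ifs with h
  · have h1 := cdf_le_nextVal X A x
    have h2 := X.cdfLt_le_cdf x
    linarith
  · exact le_refl 0

lemma minA_eq (hA : A ⊆ X.f.support) (hne : A.Nonempty)
    (hmin : X.f.support.min' X.supp_nonempty ∈ A) : A.min' hne = X.f.support.min' X.supp_nonempty := by
  apply le_antisymm (Finset.min'_le _ _ hmin)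
  exact Finset.le_min' _ _ _ (fun y hy => Finset.min'_le _ _ (hA hy))

lemma cdfLt_minA (hA : A ⊆ X.f.support) (hne : A.Nonempty)
    (hmin : X.f.support.min' X.supp_nonempty ∈ A) : X.cdfLt (A.min' hne) = 0 := by
  rw [minA_eq X A hA hne hmin]
  exact X.cdfLt_min

lemma nextVal_maxA (hne : A.Nonempty) : nextVal X A (A.max' hne) = 1 := by
  rw [nextVal, dif_neg]
  rw [Finset.not_nonempty_iff_eq_empty]
  apply Finset.filter_eq_empty_iff.mpr
  intro x hx
  exact not_lt.mpr (Finset.le_max' A x hx)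

lemma approxF_sum_one (hA : A ⊆ X.f.support) (hne : A.Nonempty)
    (hmin : X.f.support.min' X.supp_nonempty ∈ A) : (approxF X A).sum (fun _ p => p) = 1 := by
  rw [Finsupp.sum]
  have hsub : (approxF X A).support ⊆ A := approxF_support_subset X A
  rw [Finset.sum_subset hsub (fun x _ hx => Finsupp.notMem_support_iff.mp hx)]
  rw [Finset.sum_congr rfl (fun a ha => approxF_apply X A ha)]
  rw [telescope X A A hne (le_refl _) (fun x hx _ => hx)]
  rw [nextVal_maxA X A hne, cdfLt_minA X A hA hne hmin]
  ring

noncomputable def approx (hA : A ⊆ X.f.support) (hne : A.Nonempty)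
    (hmin : X.f.support.min' X.supp_nonempty ∈ A) : DRV :=
  ⟨approxF X A, approxF_nonneg X A, approxF_sum_one X A hA hne hmin⟩

lemma approx_suppSize (hA : A ⊆ X.f.support) (hne : A.Nonempty)
    (hmin : X.f.support.min' X.supp_nonempty ∈ A) : (approx X A hA hne hmin).suppSize ≤ A.card :=
  Finset.card_le_card (approxF_support_subset X A)

lemma approx_cdf_eq_sum (hA : A ⊆ X.f.support) (hne : A.Nonempty)
    (hmin : X.f.support.min' X.supp_nonempty ∈ A) (t : ℝ) :
    (approx X A hA hne hmin).cdf t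
      = ∑ a ∈ A.filter (· ≤ t), (nextVal X A a - X.cdfLt a) := by
  rw [DRV.cdf]
  have hsub : ((approx X A hA hne hmin).f.support.filter (· ≤ t)) ⊆ A.filter (· ≤ t) :=
    Finset.filter_subset_filter _ (approxF_support_subset X A)
  rw [Finset.sum_subset hsub (fun x hx hnx => Finsupp.notMem_support_iff.mp
    (fun hs => hnx (Finset.mem_filter.mpr ⟨hs, (Finset.mem_filter.mp hx).2⟩)))]
  exact Finset.sum_congr rfl (fun a ha => approxF_apply X A (Finset.mem_filter.mp ha).1)

lemma approx_cdf_of_empty (hA : A ⊆ X.f.support) (hne : A.Nonempty)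
    (hmin : X.f.support.min' X.supp_nonempty ∈ A) {t : ℝ} (h : A.filter (· ≤ t) = ∅) :
    (approx X A hA hne hmin).cdf t = 0 := by
  rw [approx_cdf_eq_sum X A hA hne hmin t, h, Finset.sum_empty]

lemma approx_cdf_of_nonempty (hA : A ⊆ X.f.support) (hne : A.Nonempty)
    (hmin : X.f.support.min' X.supp_nonempty ∈ A) {t : ℝ} (h : (A.filter (· ≤ t)).Nonempty) :
    (approx X A hA hne hmin).cdf t
      = nextVal X A ((A.filter (· ≤ t)).max' h) := by
  rw [approx_cdf_eq_sum X A hA hne hmin t]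
  have hsub : A.filter (· ≤ t) ⊆ A := Finset.filter_subset _ _
  have hmax := (A.filter (· ≤ t)).max'_mem h
  have hmaxt : (A.filter (· ≤ t)).max' h ≤ t := (Finset.mem_filter.mp hmax).2
  have hdc : ∀ x ∈ A, x ≤ (A.filter (· ≤ t)).max' h → x ∈ A.filter (· ≤ t) :=
    fun x hx hxle => Finset.mem_filter.mpr ⟨hx, hxle.trans hmaxt⟩
  rw [telescope X A _ h hsub hdc]
  have hminmem : A.min' hne ∈ A.filter (· ≤ t) := by
    obtain ⟨y, hy⟩ := h
    exact Finset.mem_filter.mpr ⟨A.min'_mem hne,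
      (A.min'_le y (Finset.mem_filter.mp hy).1).trans (Finset.mem_filter.mp hy).2⟩
  have hminEq : (A.filter (· ≤ t)).min' h = A.min' hne := by
    apply le_antisymm (Finset.min'_le _ _ hminmem)
    exact Finset.le_min' _ _ _ (fun y hy => A.min'_le y ((Finset.filter_subset _ _) hy))
  rw [hminEq, cdfLt_minA X A hA hne hmin]
  ring

/-- the approximation dominates the original CDF. -/
lemma le_approx_cdf (hA : A ⊆ X.f.support) (hne : A.Nonempty)
    (hmin : X.f.support.min' X.supp_nonempty ∈ A) (t : ℝ) : X.cdf t ≤ (approx X A hA hne hmin).cdf t := by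
  rcases Finset.eq_empty_or_nonempty (A.filter (· ≤ t)) with h | h
  · rw [approx_cdf_of_empty X A hA hne hmin h]
    -- no support point of X is ≤ t
    rw [DRV.cdf]
    apply le_of_eq
    apply Finset.sum_eq_zero
    intro x hx
    exfalso
    rw [Finset.mem_filter] at hx
    have h1 : X.f.support.min' X.supp_nonempty ≤ x := Finset.min'_le _ _ hx.1
    have h2 : X.f.support.min' X.supp_nonempty ≤ t := h1.trans hx.2
    exact (Finset.eq_empty_iff_forall_notMem.mp h) _
      (Finset.mem_filter.mpr ⟨hmin, h2⟩)
  · rw [approx_cdf_of_nonempty X A hA hne hmin h]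
    set M := (A.filter (· ≤ t)).max' h with hM
    have hMmem := (A.filter (· ≤ t)).max'_mem h
    rw [nextVal]
    split_ifs with h2
    · -- next block start b' is > t
      have hb'mem := (A.filter (M < ·)).min'_mem h2
      rw [Finset.mem_filter] at hb'mem
      have hb't : t < (A.filter (M < ·)).min' h2 := by
        by_contra hc
        push_neg at hc
        have : (A.filter (M < ·)).min' h2 ∈ A.filter (· ≤ t) :=
          Finset.mem_filter.mpr ⟨hb'mem.1, hc⟩
        exact absurd (Finset.le_max' _ _ this) (not_le.mpr hb'mem.2)
      exact X.cdf_le_cdfLt hb't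
    · exact X.cdf_le_one t

/-- upper bound on the approximation error in terms of the per-block error. -/
lemma approx_cdf_le (hA : A ⊆ X.f.support) (hne : A.Nonempty)
    (hmin : X.f.support.min' X.supp_nonempty ∈ A) {d : ℝ} (hd : ∀ a ∈ A, nextVal X A a - X.cdf a ≤ d)
    (hd0 : 0 ≤ d) (t : ℝ) :
    (approx X A hA hne hmin).cdf t ≤ X.cdf t + d := by
  rcases Finset.eq_empty_or_nonempty (A.filter (· ≤ t)) with h | h
  · rw [approx_cdf_of_empty X A hA hne hmin h]
    have := X.cdf_nonneg t
    linarith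
  · rw [approx_cdf_of_nonempty X A hA hne hmin h]
    have hMmem := (A.filter (· ≤ t)).max'_mem h
    rw [Finset.mem_filter] at hMmem
    have h1 := hd _ hMmem.1
    have h2 : X.cdf ((A.filter (· ≤ t)).max' h) ≤ X.cdf t := X.cdf_mono hMmem.2
    linarith

lemma dK_approx_le (hA : A ⊆ X.f.support) (hne : A.Nonempty)
    (hmin : X.f.support.min' X.supp_nonempty ∈ A) {d : ℝ} (hd : ∀ a ∈ A, nextVal X A a - X.cdf a ≤ d)
    (hd0 : 0 ≤ d) : dK X (approx X A hA hne hmin) ≤ d := by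
  apply dK_le
  intro t
  rw [abs_le]
  constructor
  · have := approx_cdf_le X A hA hne hmin hd hd0 t
    linarith
  · have := le_approx_cdf X A hA hne hmin t
    linarith

end Approx

section Choice

noncomputable def psi (Y : DRV) (x : ℝ) : ℕ := (Y.f.support.filter (· ≤ x)).card

lemma psi_mono (Y : DRV) {x y : ℝ} (h : x ≤ y) : psi Y x ≤ psi Y y := by
  apply Finset.card_le_card
  intro z hz
  rw [Finset.mem_filter] at hz ⊢
  exact ⟨hz.1, hz.2.trans h⟩

lemma cdf_eq_of_psi_eq (Y : DRV) {x y : ℝ} (hxy : x ≤ y) (h : psi Y x = psi Y y) :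
    Y.cdf y = Y.cdf x := by
  rw [DRV.cdf, DRV.cdf]
  congr 1
  symm
  apply Finset.eq_of_subset_of_card_le
  · intro z hz
    rw [Finset.mem_filter] at hz ⊢
    exact ⟨hz.1, hz.2.trans hxy⟩
  · exact le_of_eq (by rw [psi, psi] at h; omega)

lemma filter_nonempty_of_le (X Y : DRV) (hle : ∀ t, X.cdf t ≤ Y.cdf t) {a : ℝ}
    (ha : a ∈ X.f.support) : 1 ≤ psi Y a := by
  rw [psi, Nat.one_le_iff_ne_zero, ← Nat.pos_iff_ne_zero, Finset.card_pos]
  rcases Finset.eq_empty_or_nonempty (Y.f.support.filter (· ≤ a)) with h | h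
  · exfalso
    have h1 : Y.cdf a = 0 := by rw [DRV.cdf, h, Finset.sum_empty]
    have h2 : X.f a ≤ X.cdf a := by
      apply Finset.single_le_sum (fun x _ => X.nonneg x)
      exact Finset.mem_filter.mpr ⟨ha, le_refl a⟩
    have h3 : 0 < X.f a := lt_of_le_of_ne (X.nonneg a)
      (Ne.symm (Finsupp.mem_support_iff.mp ha))
    have h4 := hle a
    linarith
  · exact h

noncomputable def goodA (X Y : DRV) : Finset ℝ :=
  X.f.support.filter (fun a => ∀ x ∈ X.f.support, x < a → psi Y x < psi Y a)

lemma goodA_subset (X Y : DRV) : goodA X Y ⊆ X.f.support := Finset.filter_subset _ _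

lemma goodA_min_mem (X Y : DRV) :
    X.f.support.min' X.supp_nonempty ∈ goodA X Y := by
  rw [goodA, Finset.mem_filter]
  refine ⟨X.f.support.min'_mem _, fun x hx hlt => ?_⟩
  exact absurd hlt (not_lt.mpr (Finset.min'_le _ _ hx))

lemma goodA_nonempty (X Y : DRV) : (goodA X Y).Nonempty :=
  ⟨_, goodA_min_mem X Y⟩

lemma goodA_card (X Y : DRV) (hle : ∀ t, X.cdf t ≤ Y.cdf t) :
    (goodA X Y).card ≤ Y.suppSize := by
  have hinj : Set.InjOn (psi Y) (goodA X Y) := by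
    intro a ha b hb hab
    rcases lt_trichotomy a b with h | h | h
    · exfalso
      have hbp := (Finset.mem_filter.mp hb).2
      have := hbp a ((Finset.mem_filter.mp ha).1) h
      omega
    · exact h
    · exfalso
      have hap := (Finset.mem_filter.mp ha).2
      have := hap b ((Finset.mem_filter.mp hb).1) h
      omega
  have h1 : (goodA X Y).card = ((goodA X Y).image (psi Y)).card :=
    (Finset.card_image_of_injOn hinj).symm
  rw [h1]
  have h2 : (goodA X Y).image (psi Y) ⊆ Finset.Icc 1 Y.suppSize := by
    intro k hk
    rw [Finset.mem_image] at hk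
    obtain ⟨a, ha, rfl⟩ := hk
    rw [Finset.mem_Icc]
    constructor
    · exact filter_nonempty_of_le X Y hle (goodA_subset X Y ha)
    · exact Finset.card_le_card (Finset.filter_subset _ _)
  calc ((goodA X Y).image (psi Y)).card ≤ (Finset.Icc 1 Y.suppSize).card :=
        Finset.card_le_card h2
    _ = Y.suppSize := by rw [Nat.card_Icc]; omega

lemma goodA_gap (X Y : DRV) (hle : ∀ t, X.cdf t ≤ Y.cdf t) {ε : ℝ}
    (hd : ∀ t, |X.cdf t - Y.cdf t| ≤ ε) {a : ℝ} (ha : a ∈ goodA X Y) :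
    nextVal X (goodA X Y) a - X.cdf a ≤ ε := by
  obtain ⟨b, hbS, hab, hEq, hblock⟩ :=
    nextVal_eq_cdf X (goodA X Y) (goodA_subset X Y) ha
  have haS : a ∈ X.f.support := goodA_subset X Y ha
  -- psi Y b = psi Y a
  have hpsi : psi Y b = psi Y a := by
    by_contra hc
    have hlt : psi Y a < psi Y b :=
      lt_of_le_of_ne (psi_mono Y hab) (fun h => hc h.symm)
    set T := X.f.support.filter (fun z => psi Y b ≤ psi Y z) with hT
    have hbT : b ∈ T := Finset.mem_filter.mpr ⟨hbS, le_refl _⟩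
    have hTne : T.Nonempty := ⟨b, hbT⟩
    set m := T.min' hTne with hm
    have hmT := T.min'_mem hTne
    have hmS : m ∈ X.f.support := (Finset.mem_filter.mp hmT).1
    have hmb : m ≤ b := T.min'_le b hbT
    have hpsim : psi Y m = psi Y b :=
      le_antisymm (psi_mono Y hmb) (Finset.mem_filter.mp hmT).2
    have hmA : m ∈ goodA X Y := by
      rw [goodA, Finset.mem_filter]
      refine ⟨hmS, fun x hx hxm => ?_⟩
      by_contra hcc
      push_neg at hcc
      have hxT : x ∈ T := Finset.mem_filter.mpr ⟨hx, hpsim ▸ hcc⟩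
      exact absurd (T.min'_le x hxT) (not_le.mpr hxm)
    have ham : a < m := by
      by_contra hcc
      push_neg at hcc
      have := psi_mono Y hcc
      omega
    exact absurd hmb (not_le.mpr (hblock m hmA ham))
  have h1 : Y.cdf b = Y.cdf a := cdf_eq_of_psi_eq Y hab hpsi.symm
  have h2 : X.cdf b ≤ Y.cdf b := hle b
  have h3 : Y.cdf a - X.cdf a ≤ ε := by
    have := hd a
    rw [abs_le] at this
    linarith [this.1]
  rw [hEq]
  linarith

end Choice

lemma mu_le_of_feasible (X Z : DRV) (ε : ℝ) (h1 : ∀ t, X.cdf t ≤ Z.cdf t)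
    (h2 : dK X Z ≤ ε) : mu X ε ≤ Z.suppSize :=
  Nat.sInf_le ⟨Z, h1, h2, rfl⟩

lemma mu_mem (X : DRV) {ε : ℝ} (hε : 0 ≤ ε) :
    ∃ Y : DRV, (∀ t, X.cdf t ≤ Y.cdf t) ∧ dK X Y ≤ ε ∧ Y.suppSize = mu X ε := by
  have hne : {k | ∃ X' : DRV, (∀ t, X.cdf t ≤ X'.cdf t) ∧ dK X X' ≤ ε ∧
      X'.suppSize = k}.Nonempty :=
    ⟨X.suppSize, X, fun t => le_refl _, by rw [dK_self]; exact hε, rfl⟩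
  exact Nat.sInf_mem hne

/-- Main structural lemma: for any `ε ≥ 0` the optimum is (weakly) attained by
an approximation whose distance to `X` is a difference of CDF values. -/
lemma mu_attained (X : DRV) {ε : ℝ} (hε : 0 ≤ ε) :
    ∃ a ∈ X.f.support, ∃ b ∈ X.f.support, a ≤ b ∧ X.cdf b - X.cdf a ≤ ε ∧
      ∃ Z : DRV, (∀ t, X.cdf t ≤ Z.cdf t) ∧ dK X Z ≤ X.cdf b - X.cdf a ∧
        Z.suppSize ≤ mu X ε := by
  obtain ⟨Y, hle, hdK, hsize⟩ := mu_mem X hε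
  have hd : ∀ t, |X.cdf t - Y.cdf t| ≤ ε := fun t => (abs_le_dK X Y t).trans hdK
  set A := goodA X Y with hA
  obtain ⟨a, haA, hmax⟩ :=
    Finset.exists_max_image A (fun a => nextVal X A a - X.cdf a) (goodA_nonempty X Y)
  obtain ⟨b, hbS, hab, hEq, _⟩ := nextVal_eq_cdf X A (goodA_subset X Y) haA
  have haS : a ∈ X.f.support := goodA_subset X Y haA
  refine ⟨a, haS, b, hbS, hab, ?_, ?_⟩
  · have := goodA_gap X Y hle hd haA
    rw [hEq] at this
    exact this
  · refine ⟨approx X A (goodA_subset X Y) (goodA_nonempty X Y) (goodA_min_mem X Y),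
      le_approx_cdf X A _ _ _, ?_, ?_⟩
    · apply dK_approx_le
      · intro a' ha'
        have := hmax a' ha'
        rw [hEq] at this
        exact this
      · rw [← hEq]
        have h1 := cdf_le_nextVal X A a
        linarith
    · calc (approx X A _ _ _).suppSize ≤ A.card :=
          approx_suppSize X A _ _ _
        _ ≤ Y.suppSize := goodA_card X Y hle
        _ = mu X ε := hsize

lemma mu_antitone (X : DRV) {ε ε' : ℝ} (hε : 0 ≤ ε) (h : ε ≤ ε') :
    mu X ε' ≤ mu X ε := by
  obtain ⟨Y, h1, h2, h3⟩ := mu_mem X hε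
  rw [← h3]
  exact mu_le_of_feasible X Y ε' h1 (h2.trans h)

/-- The map `ε ↦ μ(ε)` on `[0,∞)` is a step function taking at most `n + 1`
distinct values (where `n = |supp X|`), and its points of discontinuity (the
points where it is not locally constant) are contained in the set `E` of
pairwise differences of CDF values of `X`. -/
theorem mu_step_function (X : DRV) :
    (mu X '' Set.Ici 0).Finite ∧ (mu X '' Set.Ici 0).ncard ≤ X.suppSize + 1 ∧
      {ε : ℝ | 0 ≤ ε ∧
        ¬ ∃ δ > 0, ∀ ε', 0 ≤ ε' → |ε' - ε| < δ → mu X ε' = mu X ε}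
        ⊆ diffSet X := by
  have hsub : mu X '' Set.Ici 0 ⊆ Set.Iic X.suppSize := by
    rintro _ ⟨ε, hε, rfl⟩
    rw [Set.mem_Iic]
    exact mu_le_of_feasible X X ε (fun t => le_refl _) (by rw [dK_self]; exact hε)
  refine ⟨(Set.finite_Iic _).subset hsub, ?_, ?_⟩
  · calc (mu X '' Set.Ici 0).ncard ≤ (Set.Iic X.suppSize).ncard :=
        Set.ncard_le_ncard hsub (Set.finite_Iic _)
      _ = X.suppSize + 1 := by
        rw [← Finset.coe_Iic, Set.ncard_coe_finset, Nat.card_Iic]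
  · intro ε hε
    obtain ⟨hε0, hdisc⟩ := hε
    by_contra hE
    -- the finite set of all differences of CDF values
    set V : Finset ℝ :=
      (X.f.support ×ˢ X.f.support).image (fun p => X.cdf p.2 - X.cdf p.1) with hV
    -- choose δ > 0 so that no element of V lies in (ε, ε + δ)
    set W := V.filter (fun v => ε < v) with hW
    set δ : ℝ := if h : W.Nonempty then W.min' h - ε else 1 with hδ
    have hδpos : 0 < δ := by
      rw [hδ]
      split_ifs with h
      · have h2 : ε < W.min' h := (Finset.mem_filter.mp (W.min'_mem h)).2
        linarith
      · norm_num
    have hδprop : ∀ v ∈ V, v < ε + δ → v ≤ ε := by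
      intro v hv hvδ
      by_contra hc
      push_neg at hc
      have hvW : v ∈ W := Finset.mem_filter.mpr ⟨hv, hc⟩
      have hne : W.Nonempty := ⟨v, hvW⟩
      rw [hδ, dif_pos hne] at hvδ
      have := W.min'_le v hvW
      linarith
    -- right local constancy
    have claim1 : ∀ ε', ε ≤ ε' → ε' < ε + δ → mu X ε' = mu X ε := by
      intro ε' h1 h2
      have hε'0 : 0 ≤ ε' := hε0.trans h1
      apply le_antisymm (mu_antitone X hε0 h1)
      obtain ⟨a', haS, b', hbS, hab, hdε, Z', hZ1, hZ2, hZ3⟩ := mu_attained X hε'0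
      have hdV : X.cdf b' - X.cdf a' ∈ V := by
        rw [hV, Finset.mem_image]
        exact ⟨(a', b'), Finset.mem_product.mpr ⟨haS, hbS⟩, rfl⟩
      have hdle : X.cdf b' - X.cdf a' ≤ ε :=
        hδprop _ hdV (lt_of_le_of_lt hdε h2)
      calc mu X ε ≤ Z'.suppSize := mu_le_of_feasible X Z' ε hZ1 (hZ2.trans hdle)
        _ ≤ mu X ε' := hZ3
    -- the witness from the main lemma at ε
    obtain ⟨a, haS, b, hbS, hab, hdε, Z, hZ1, hZ2, hZ3⟩ := mu_attained X hε0
    have hd0 : 0 ≤ X.cdf b - X.cdf a := sub_nonneg.mpr (X.cdf_mono hab)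
    -- left local constancy above the witness distance
    have claim2 : ∀ ε', X.cdf b - X.cdf a ≤ ε' → ε' ≤ ε → mu X ε' = mu X ε := by
      intro ε' h1 h2
      have hε'0 : 0 ≤ ε' := hd0.trans h1
      apply le_antisymm _ (mu_antitone X hε'0 h2)
      calc mu X ε' ≤ Z.suppSize := mu_le_of_feasible X Z ε' hZ1 (hZ2.trans h1)
        _ ≤ mu X ε := hZ3
    have hdlt : X.cdf b - X.cdf a < ε ∨ X.cdf b - X.cdf a = ε :=
      lt_or_eq_of_le hdε
    rcases hdlt with hlt | heq
    · -- δ' = min δ (ε - d) works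
      apply hdisc
      refine ⟨min δ (ε - (X.cdf b - X.cdf a)), lt_min hδpos (by linarith), ?_⟩
      intro ε' hε'0 habs
      rcases le_or_gt ε ε' with h1 | h1
      · apply claim1 ε' h1
        have := abs_lt.mp habs
        have := min_le_left δ (ε - (X.cdf b - X.cdf a))
        linarith [this, (abs_lt.mp habs).2]
      · apply claim2 ε' _ h1.le
        have h2 := (abs_lt.mp habs).1
        have h3 := min_le_right δ (ε - (X.cdf b - X.cdf a))
        linarith
    · -- d = ε : then a = b (else ε ∈ diffSet), so ε = 0
      have hab' : a = b := by
        by_contra hc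
        have hlt : a < b := lt_of_le_of_ne hab hc
        exact hE (Or.inl ⟨a, haS, b, hbS, hlt, heq.symm⟩)
      have hε0' : ε = 0 := by rw [← heq, hab']; ring
      apply hdisc
      refine ⟨δ, hδpos, ?_⟩
      intro ε' hε'0 habs
      apply claim1 ε' (hε0' ▸ hε'0)
      have := (abs_lt.mp habs).2
      linarith
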